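/- When a = −2, the coefficient of determination for the perturbed response y+ε equals R², the coefficient of determination of the original response, for every b > 0. -/

import Mathlib

/-!
The perturbation `ε` is orthogonal to the column space of `X`, which contains both the fitted
values and the constant vector, so `ε` changes the residual `e` and the centred response
`y - ȳ 1` by the same cross term: `‖v + ε‖² = ‖v‖² + 2 ⟪e, ε⟫ + ‖ε‖²` for both. For the
perturbation with parameters `a, b` this increment equals `a (a + 2) ‖e‖² / (1 + b)`, which
vanishes at `a = -2`, so numerator and denominator of `1 - R²` are both unchanged.
-/

open Matrix BigOperators

/-- Euclidean norm of a vector in ℝⁿ. -/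
noncomputable def nrm {n : ℕ} (v : Fin n → ℝ) : ℝ := Real.sqrt (v ⬝ᵥ v)

section ColumnSpace

variable {m k R : Type*} [Fintype m] [Fintype k] [CommRing R]

theorem transpose_mulVec_sub_mulVec_leastSquares [DecidableEq k] (X : Matrix m k R)
    (hX : IsUnit (Xᵀ * X).det) (y : m → R) :
    Xᵀ *ᵥ (y - X *ᵥ ((Xᵀ * X)⁻¹ *ᵥ (Xᵀ *ᵥ y))) = 0 := by
  rw [mulVec_sub, mulVec_mulVec, mulVec_mulVec, mul_nonsing_inv _ hX, one_mulVec, sub_self]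

theorem sub_mulVec_dotProduct_of_transpose_mulVec_eq_zero {X : Matrix m k R} {v : m → R}
    (hv : Xᵀ *ᵥ v = 0) (y : m → R) (β : k → R) : (y - X *ᵥ β) ⬝ᵥ v = y ⬝ᵥ v := by
  rw [sub_dotProduct, dotProduct_comm (X *ᵥ β), dotProduct_mulVec, ← mulVec_transpose, hv,
    zero_dotProduct, sub_zero]

theorem sub_const_dotProduct_of_transpose_mulVec_eq_zero {X : Matrix m k R} {j : k}
    (hj : ∀ i, X i j = 1) {v : m → R} (hv : Xᵀ *ᵥ v = 0) (y : m → R) (c : R) :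
    (y - fun _ => c) ⬝ᵥ v = y ⬝ᵥ v := by
  classical
  have hconst : (fun _ => c) = X *ᵥ Pi.single j c := by
    funext i
    simp [mulVec, dotProduct_single, hj]
  rw [hconst, sub_mulVec_dotProduct_of_transpose_mulVec_eq_zero hv]

end ColumnSpace

theorem add_dotProduct_self {ι R : Type*} [Fintype ι] [CommRing R] (v w : ι → R) :
    (v + w) ⬝ᵥ (v + w) = v ⬝ᵥ v + (2 * (v ⬝ᵥ w) + w ⬝ᵥ w) := by
  rw [add_dotProduct, dotProduct_add, dotProduct_add, dotProduct_comm w v]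
  ring

section Perturbation

variable {n : ℕ}

theorem nrm_sq (v : Fin n → ℝ) : nrm v ^ 2 = v ⬝ᵥ v :=
  Real.sq_sqrt (Finset.sum_nonneg fun i _ => mul_self_nonneg (v i))

theorem nrm_ne_zero {v : Fin n → ℝ} (hv : v ≠ 0) : nrm v ≠ 0 := by
  rw [← pow_ne_zero_iff two_ne_zero, nrm_sq]
  exact dotProduct_self_eq_zero.not.mpr hv

noncomputable def perturbationDirection (b : ℝ) (e u : Fin n → ℝ) : Fin n → ℝ :=
  (nrm e)⁻¹ • e + Real.sqrt b • ((nrm u)⁻¹ • u)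

noncomputable def perturbation (a b : ℝ) (e u : Fin n → ℝ) : Fin n → ℝ :=
  (a * nrm e / (1 + b)) • perturbationDirection b e u

theorem dotProduct_perturbationDirection {e u : Fin n → ℝ} (heu : e ⬝ᵥ u = 0) (b : ℝ) :
    e ⬝ᵥ perturbationDirection b e u = nrm e := by
  simp only [perturbationDirection, dotProduct_add, dotProduct_smul, heu, smul_eq_mul, mul_zero,
    add_zero, ← nrm_sq]
  rw [sq, ← mul_assoc, inv_mul_mul_self]

theorem perturbationDirection_dotProduct_self {e u : Fin n → ℝ} (he : e ≠ 0) (hu : u ≠ 0)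
    (heu : e ⬝ᵥ u = 0) {b : ℝ} (hb : 0 ≤ b) :
    perturbationDirection b e u ⬝ᵥ perturbationDirection b e u = 1 + b := by
  have hue : u ⬝ᵥ e = 0 := by rw [dotProduct_comm, heu]
  simp only [perturbationDirection, add_dotProduct, dotProduct_add, dotProduct_smul,
    smul_dotProduct, heu, hue, smul_eq_mul, ← nrm_sq]
  field_simp [nrm_ne_zero he, nrm_ne_zero hu]
  linear_combination nrm e * nrm u * Real.mul_self_sqrt hb

theorem two_mul_dotProduct_perturbation_add_self {e u : Fin n → ℝ} (he : e ≠ 0) (hu : u ≠ 0)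
    (heu : e ⬝ᵥ u = 0) (a : ℝ) {b : ℝ} (hb : 0 ≤ b) :
    2 * (e ⬝ᵥ perturbation a b e u) + perturbation a b e u ⬝ᵥ perturbation a b e u =
      a * (a + 2) * nrm e ^ 2 / (1 + b) := by
  have hb1 : 1 + b ≠ 0 := by positivity
  simp only [perturbation, dotProduct_smul, smul_dotProduct, smul_eq_mul,
    dotProduct_perturbationDirection heu, perturbationDirection_dotProduct_self he hu heu hb]
  field_simp
  ring

theorem transpose_mulVec_perturbation {k : Type*} [Fintype k] {X : Matrix (Fin n) k ℝ}
    {e u : Fin n → ℝ} (hXe : Xᵀ *ᵥ e = 0) (hXu : Xᵀ *ᵥ u = 0) (a b : ℝ) :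
    Xᵀ *ᵥ perturbation a b e u = 0 := by
  simp only [perturbation, perturbationDirection, mulVec_smul, mulVec_add, hXe, hXu, smul_zero,
    add_zero]

end Perturbation

theorem R_squared_invariant_a_eq_neg_two_general {n p : ℕ}
    (X : Matrix (Fin n) (Fin (p + 1)) ℝ)
    (hX : IsUnit (Xᵀ * X).det)
    (hone : ∃ j, ∀ i, X i j = 1)
    (y e : Fin n → ℝ)
    (he : e = y - X.mulVec ((Xᵀ * X)⁻¹.mulVec (Xᵀ.mulVec y)))
    (he0 : e ≠ 0)
    (ybar : ℝ)
    (u : Fin n → ℝ) (hu0 : u ≠ 0)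
    (hXu : Xᵀ.mulVec u = 0) (heu : e ⬝ᵥ u = 0)
    (b : ℝ) (hb : 0 < b)
    (ε : Fin n → ℝ)
    (hε : ε = ((-2 : ℝ) * nrm e / (1 + b)) •
        ((nrm e)⁻¹ • e + Real.sqrt b • ((nrm u)⁻¹ • u)))
    (R2 : ℝ) (hR2 : R2 = 1 - (nrm e) ^ 2 / (nrm (y - fun _ => ybar)) ^ 2)
    (R2t : ℝ)
    (hR2t : R2t = 1 - (nrm (e + ε)) ^ 2 / (nrm (y + ε - fun _ => ybar)) ^ 2) :
    R2t = R2 := by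
  obtain ⟨j, hj⟩ := hone
  replace hε : ε = perturbation (-2) b e u := hε
  have hcross : 2 * (e ⬝ᵥ ε) + ε ⬝ᵥ ε = 0 := by
    rw [hε, two_mul_dotProduct_perturbation_add_self he0 hu0 heu (-2) hb.le]
    ring
  have hXe : Xᵀ *ᵥ e = 0 := by
    rw [he]
    exact transpose_mulVec_sub_mulVec_leastSquares X hX y
  have hXε : Xᵀ *ᵥ ε = 0 := hε ▸ transpose_mulVec_perturbation hXe hXu (-2) b
  have hcentred : (y - fun _ => ybar) ⬝ᵥ ε = e ⬝ᵥ ε := by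
    rw [sub_const_dotProduct_of_transpose_mulVec_eq_zero hj hXε, he,
      sub_mulVec_dotProduct_of_transpose_mulVec_eq_zero hXε]
  rw [hR2t, hR2, add_sub_right_comm, nrm_sq, nrm_sq, nrm_sq, nrm_sq, add_dotProduct_self,
    add_dotProduct_self, hcentred, hcross, add_zero, add_zero]

/-- When a = −2, for every b > 0 the coefficient of determination
of the perturbed response y+ε equals R². -/
theorem R_squared_invariant_a_eq_neg_two {n p : ℕ}
    (X : Matrix (Fin n) (Fin (p + 1)) ℝ)
    (hX : IsUnit (Xᵀ * X).det)
    (hone : ∃ j, ∀ i, X i j = 1)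
    (y e : Fin n → ℝ)
    (he : e = y - X.mulVec ((Xᵀ * X)⁻¹.mulVec (Xᵀ.mulVec y)))
    (he0 : e ≠ 0)
    (ybar : ℝ) (hybar : ybar = (∑ i, y i) / (n : ℝ))
    (hy : y ≠ fun _ => ybar)
    (u : Fin n → ℝ) (hu0 : u ≠ 0)
    (hXu : Xᵀ.mulVec u = 0) (heu : e ⬝ᵥ u = 0)
    (b : ℝ) (hb : 0 < b)
    (ε : Fin n → ℝ)
    (hε : ε = ((-2 : ℝ) * nrm e / (1 + b)) •
        ((nrm e)⁻¹ • e + Real.sqrt b • ((nrm u)⁻¹ • u)))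
    (R2 : ℝ) (hR2 : R2 = 1 - (nrm e) ^ 2 / (nrm (y - fun _ => ybar)) ^ 2)
    (R2t : ℝ)
    (hR2t : R2t = 1 - (nrm (e + ε)) ^ 2 / (nrm (y + ε - fun _ => ybar)) ^ 2) :
    R2t = R2 :=
  R_squared_invariant_a_eq_neg_two_general X hX hone y e he he0 ybar u hu0 hXu heu b hb ε hε R2 hR2
    R2t hR2t
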